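/- In the DAG, for any vertices u, v such that there is a directed path from u to v, it is not the case that ℓ(u) ≻ ℓ(v); in particular, for every arc (v_i, v_{i+1}) on a directed path v_0 → v_1 → ... → v_t, it is not the case that ℓ(v_i) ≻ ℓ(v_{i+1}). -/
import Mathlib


open Classical Finset
open scoped Classical

noncomputable section

variable {V : Type*}

/-- Reachability: `reach adj u v` iff there is a directed path from `u` to `v`
(including the trivial path, so `reach adj v v` always holds). -/
def reach (adj : V → V → Prop) : V → V → Prop := Relation.ReflTransGen adj

/-- The graph has no (nontrivial) directed cycle. -/
def IsAcyclic (adj : V → V → Prop) : Prop := ∀ x, ¬ Relation.TransGen adj x x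

/-- `P(v)`: the set of predecessors of `v` (vertices with a path to `v`, including `v`). -/
def predSet [Fintype V] (adj : V → V → Prop) (v : V) : Finset V :=
  Finset.univ.filter fun u => reach adj u v

/-- `S(v)`: the set of successors of `v` (vertices reachable from `v`, including `v`). -/
def succSet [Fintype V] (adj : V → V → Prop) (v : V) : Finset V :=
  Finset.univ.filter fun u => reach adj v u

/-- The element of `A` of minimum rank (an arbitrary vertex if `A = ∅`). -/
def argminR [Nonempty V] (r : V → ℕ∞) (A : Finset V) : V :=
  if h : A.Nonempty then (Finset.exists_min_image A r h).choose else Classical.arbitrary V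

/-- The sets `A_{i+1}(v)` (0-indexed: `Aset adj L r v i` is the paper's `A_{i+1}(v)`):
`A_1(v) = P(v) ∩ L`, and `A_{i+1}(v) = (S(ℓ_i(v)) ∩ P(v) ∩ L) \ {ℓ_i(v)}` where
`ℓ_i(v)` is the minimum-rank element of `A_i(v)`. -/
def Aset [Fintype V] [Nonempty V] (adj : V → V → Prop) (L : Finset V) (r : V → ℕ∞)
    (v : V) : ℕ → Finset V
  | 0 => predSet adj v ∩ L
  | i + 1 =>
    if (Aset adj L r v i).Nonempty then
      (succSet adj (argminR r (Aset adj L r v i)) ∩ predSet adj v ∩ L).erase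
        (argminR r (Aset adj L r v i))
    else ∅

/-- `ℓ_{i+1}(v)` (0-indexed). -/
def labVertex [Fintype V] [Nonempty V] (adj : V → V → Prop) (L : Finset V) (r : V → ℕ∞)
    (v : V) (i : ℕ) : V := argminR r (Aset adj L r v i)

/-- `k(v)`: the number of indices `i` with `A_{i+1}(v) ≠ ∅` (in a DAG the sets shrink,
so this is the largest `i` with `A_i(v) ≠ ∅`, in the paper's 1-indexed convention). -/
def kOf [Fintype V] [Nonempty V] (adj : V → V → Prop) (L : Finset V) (r : V → ℕ∞) (v : V) : ℕ :=
  ((Finset.range (Fintype.card V + 1)).filter fun i => (Aset adj L r v i).Nonempty).card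

/-- The label `ℓ(v) = (ℓ_1(v), …, ℓ_{k(v)}(v))`. -/
def labelSeq [Fintype V] [Nonempty V] (adj : V → V → Prop) (L : Finset V) (r : V → ℕ∞)
    (v : V) : List V :=
  (List.range (kOf adj L r v)).map (labVertex adj L r v)

/-- The rank sequence `r(ℓ(v))` with `+∞` appended. -/
def rankSeq [Fintype V] [Nonempty V] (adj : V → V → Prop) (L : Finset V) (r : V → ℕ∞)
    (v : V) : List ℕ∞ :=
  ((labelSeq adj L r v).map r) ++ [⊤]

/-- `ℓ(u) ≺ ℓ(v)`: decreasing lexicographic order on the rank sequences with `+∞` appended. -/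
def labLt [Fintype V] [Nonempty V] (adj : V → V → Prop) (L : Finset V) (r : V → ℕ∞)
    (u v : V) : Prop :=
  List.Lex (· < ·) (rankSeq adj L r v) (rankSeq adj L r u)


set_option linter.unusedSectionVars false

section Aux

private lemma lex_irrefl' {α : Type*} [Preorder α] : ∀ l : List α, ¬ List.Lex (· < ·) l l
  | [] => by intro h; cases h
  | a :: t => by
    intro h
    cases h with
    | rel h => exact lt_irrefl _ h
    | cons h => exact lex_irrefl' t h

private lemma lex_asymm' {α : Type*} [Preorder α] :
    ∀ {l₁ l₂ : List α}, List.Lex (· < ·) l₁ l₂ → ¬ List.Lex (· < ·) l₂ l₁ := by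
  intro l₁ l₂ h
  induction h with
  | nil => intro h'; cases h'
  | @rel a l₁ b l₂ h =>
    intro h'
    cases h' with
    | rel h'' => exact absurd h (lt_asymm h'')
    | cons _ => exact lt_irrefl _ h
  | @cons a l₁ l₂ _ ih =>
    intro h'
    cases h' with
    | rel h'' => exact lt_irrefl _ h''
    | cons h'' => exact ih h''

private lemma lex_of_get' {α : Type*} [LT α] :
    ∀ (i : ℕ) (l₁ l₂ : List α), (∀ m, m < i → l₁[m]? = l₂[m]?) →
      (∃ a b, l₁[i]? = some a ∧ l₂[i]? = some b ∧ a < b) → List.Lex (· < ·) l₁ l₂ := by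
  intro i
  induction i with
  | zero =>
    rintro l₁ l₂ _ ⟨a, b, ha, hb, hab⟩
    cases l₁ with
    | nil => simp at ha
    | cons x s =>
      cases l₂ with
      | nil => simp at hb
      | cons y t =>
        simp only [List.getElem?_cons_zero, Option.some.injEq] at ha hb
        subst ha; subst hb
        exact List.Lex.rel hab
  | succ n ih =>
    rintro l₁ l₂ hpre ⟨a, b, ha, hb, hab⟩
    cases l₁ with
    | nil => simp at ha
    | cons x s =>
      cases l₂ with
      | nil => simp at hb
      | cons y t =>
        have h0 := hpre 0 (Nat.succ_pos n)
        simp only [List.getElem?_cons_zero, Option.some.injEq] at h0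
        subst h0
        refine List.Lex.cons (ih s t ?_ ⟨a, b, ?_, ?_, hab⟩)
        · intro m hm
          have := hpre (m+1) (Nat.succ_lt_succ hm)
          simpa using this
        · simpa using ha
        · simpa using hb

variable [Fintype V] [Nonempty V] {adj : V → V → Prop} {L : Finset V} {r : V → ℕ∞}

private lemma Aset_zero (v : V) : Aset adj L r v 0 = predSet adj v ∩ L := rfl

private lemma Aset_succ (v : V) (i : ℕ) :
    Aset adj L r v (i+1) =
      if (Aset adj L r v i).Nonempty then
        (succSet adj (argminR r (Aset adj L r v i)) ∩ predSet adj v ∩ L).erase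
          (argminR r (Aset adj L r v i)) else ∅ := rfl

private lemma argminR_mem {A : Finset V} (h : A.Nonempty) : argminR r A ∈ A := by
  rw [argminR, dif_pos h]
  exact (Finset.exists_min_image A r h).choose_spec.1

private lemma argminR_le {A : Finset V} (h : A.Nonempty) {b : V} (hb : b ∈ A) :
    r (argminR r A) ≤ r b := by
  rw [argminR, dif_pos h]
  exact (Finset.exists_min_image A r h).choose_spec.2 b hb

private lemma mem_succSet' {x y : V} : x ∈ succSet adj y ↔ reach adj y x := by
  simp [succSet]

private lemma predSet_mono {u v : V} (h : reach adj u v) : predSet adj u ⊆ predSet adj v := by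
  intro x hx
  simp only [predSet, mem_filter, mem_univ, true_and] at hx ⊢
  exact hx.trans h

private lemma reach_antisymm (hacyc : IsAcyclic adj) {x y : V}
    (hxy : reach adj x y) (hyx : reach adj y x) : x = y := by
  rcases hxy.cases_head with h | ⟨c, hxc, hcy⟩
  · exact h
  · exact absurd (Relation.TransGen.head' hxc (hcy.trans hyx)) (hacyc x)

private lemma Aset_subset_L (v : V) : ∀ i, Aset adj L r v i ⊆ L
  | 0 => inter_subset_right
  | i+1 => by
    rw [Aset_succ]
    split
    · exact (erase_subset _ _).trans inter_subset_right
    · exact empty_subset _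

private lemma Aset_succ_subset (hacyc : IsAcyclic adj) (v : V) (i : ℕ) :
    Aset adj L r v (i+1) ⊆ Aset adj L r v i := by
  by_cases h : (Aset adj L r v i).Nonempty
  swap
  · rw [Aset_succ, if_neg h]; exact empty_subset _
  rw [Aset_succ, if_pos h]
  intro x hx
  rw [mem_erase, mem_inter, mem_inter, mem_succSet'] at hx
  obtain ⟨hxne, ⟨⟨hre, hP⟩, hL⟩⟩ := hx
  cases i with
  | zero => exact mem_inter.mpr ⟨hP, hL⟩
  | succ i =>
    have hAi : (Aset adj L r v i).Nonempty := by
      by_contra hc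
      rw [Aset_succ, if_neg hc] at h
      exact absurd h (by simp)
    set ℓ := argminR r (Aset adj L r v (i+1)) with hℓdef
    have hmemℓ : ℓ ∈ Aset adj L r v (i+1) := argminR_mem h
    rw [Aset_succ, if_pos hAi, mem_erase, mem_inter, mem_inter, mem_succSet'] at hmemℓ
    rw [Aset_succ, if_pos hAi, mem_erase, mem_inter, mem_inter, mem_succSet']
    refine ⟨?_, ⟨hmemℓ.2.1.1.trans hre, hP⟩, hL⟩
    intro hxeq
    subst hxeq
    exact hmemℓ.1 (reach_antisymm hacyc hmemℓ.2.1.1 hre).symm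

private lemma Aset_nonempty_of_succ {v : V} {i : ℕ}
    (h : (Aset adj L r v (i+1)).Nonempty) : (Aset adj L r v i).Nonempty := by
  by_contra hc
  rw [Aset_succ, if_neg hc] at h
  exact absurd h (by simp)

private lemma Aset_nonempty_mono {v : V} {i j : ℕ} (hij : i ≤ j)
    (h : (Aset adj L r v j).Nonempty) : (Aset adj L r v i).Nonempty := by
  induction j with
  | zero => exact (Nat.le_zero.mp hij) ▸ h
  | succ j ih =>
    rcases Nat.lt_succ_iff_lt_or_eq.mp (Nat.lt_succ_of_le hij) with h' | h'
    · exact ih (Nat.lt_succ_iff.mp h') (Aset_nonempty_of_succ h)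
    · exact h' ▸ h

private lemma lt_card_of_nonempty (hacyc : IsAcyclic adj) {v : V} {i : ℕ}
    (h : (Aset adj L r v i).Nonempty) : i < Fintype.card V := by
  have key : ∀ i, (Aset adj L r v i).Nonempty →
      i + (Aset adj L r v i).card ≤ (Aset adj L r v 0).card := by
    intro i
    induction i with
    | zero => simp
    | succ i ih =>
      intro h
      have hAi := Aset_nonempty_of_succ h
      have hℓ : argminR r (Aset adj L r v i) ∉ Aset adj L r v (i+1) := by
        rw [Aset_succ, if_pos hAi]
        simp
      have hcard : (Aset adj L r v (i+1)).card < (Aset adj L r v i).card :=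
        Finset.card_lt_card ((Finset.ssubset_iff_of_subset (Aset_succ_subset hacyc v i)).mpr
          ⟨argminR r _, argminR_mem hAi, hℓ⟩)
      have := ih hAi
      omega
  have h1 := key i h
  have h2 : (Aset adj L r v 0).card ≤ Fintype.card V := Finset.card_le_univ _
  have h3 : 0 < (Aset adj L r v i).card := Finset.Nonempty.card_pos h
  omega

private lemma nonempty_iff_lt_kOf (hacyc : IsAcyclic adj) (v : V) (i : ℕ) :
    (Aset adj L r v i).Nonempty ↔ i < kOf adj L r v := by
  constructor
  · intro h
    have hsub : Finset.range (i+1) ⊆ (Finset.range (Fintype.card V + 1)).filter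
        fun j => (Aset adj L r v j).Nonempty := by
      intro j hj
      rw [Finset.mem_range] at hj
      have hji : j ≤ i := Nat.lt_succ_iff.mp hj
      have hne := Aset_nonempty_mono hji h
      exact Finset.mem_filter.mpr
        ⟨Finset.mem_range.mpr (by have := lt_card_of_nonempty hacyc h; omega), hne⟩
    have := Finset.card_le_card hsub
    rw [Finset.card_range] at this
    unfold kOf
    omega
  · intro h
    by_contra hc
    have hsub : (Finset.range (Fintype.card V + 1)).filter
        (fun j => (Aset adj L r v j).Nonempty) ⊆ Finset.range i := by
      intro j hj
      rw [Finset.mem_filter] at hj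
      rw [Finset.mem_range]
      by_contra hji
      exact hc (Aset_nonempty_mono (Nat.le_of_not_lt hji) hj.2)
    have := Finset.card_le_card hsub
    rw [Finset.card_range] at this
    unfold kOf at h
    omega

private lemma Aset_mono_of_reach {u v : V} (huv : reach adj u v) :
    ∀ i, (∀ j, j < i → (Aset adj L r u j).Nonempty ∧
        labVertex adj L r u j = labVertex adj L r v j) →
      Aset adj L r u i ⊆ Aset adj L r v i := by
  intro i
  induction i with
  | zero =>
    intro _
    rw [Aset_zero, Aset_zero]
    exact inter_subset_inter (predSet_mono huv) Finset.Subset.rfl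
  | succ i ih =>
    intro hpre
    have h1 := hpre i (Nat.lt_succ_self i)
    have hsub := ih fun j hj => hpre j (Nat.lt_succ_of_lt hj)
    have hAv : (Aset adj L r v i).Nonempty := by
      obtain ⟨x, hx⟩ := h1.1
      exact ⟨x, hsub hx⟩
    rw [Aset_succ, if_pos h1.1, Aset_succ, if_pos hAv]
    have hlab : argminR r (Aset adj L r u i) = argminR r (Aset adj L r v i) := h1.2
    rw [← hlab]
    exact Finset.erase_subset_erase _
      (inter_subset_inter (inter_subset_inter Finset.Subset.rfl (predSet_mono huv))
        Finset.Subset.rfl)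

private lemma rankSeq_getElem?_of_lt {v : V} {i : ℕ} (h : i < kOf adj L r v) :
    (rankSeq adj L r v)[i]? = some (r (labVertex adj L r v i)) := by
  rw [rankSeq, List.getElem?_append_left (by simp [labelSeq, h]),
    List.getElem?_map, labelSeq, List.getElem?_map, List.getElem?_range h]
  rfl

private lemma rankSeq_getElem?_top (v : V) :
    (rankSeq adj L r v)[kOf adj L r v]? = some ⊤ := by
  rw [rankSeq, List.getElem?_append_right (by simp [labelSeq])]
  simp [labelSeq]

end Aux

/-- labels are non-increasing (in the order `≺`) along any directed path:
if there is a path from `u` to `v` then it is not the case that `ℓ(u) ≻ ℓ(v)`. -/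
theorem labels_nonincreasing_along_path [Fintype V] [Nonempty V]
    (adj : V → V → Prop) (hacyc : IsAcyclic adj)
    (L : Finset V) (r : V → ℕ∞)
    (hfin : ∀ w ∈ L, r w ≠ ⊤) (hpos : ∀ w ∈ L, 0 < r w)
    (hinf : ∀ w ∉ L, r w = ⊤) (hinj : Set.InjOn r L)
    (u v : V) (hpath : reach adj u v) :
    ¬ labLt adj L r v u := by
  intro hlt
  rw [labLt] at hlt
  -- hlt : List.Lex (· < ·) (rankSeq adj L r u) (rankSeq adj L r v)
  by_cases hex : ∃ j, j < kOf adj L r u ∧ labVertex adj L r u j ≠ labVertex adj L r v j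
  · -- first disagreement
    have hj := Nat.find_spec hex
    set j := Nat.find hex with hjdef
    have hpre : ∀ m, m < j → (Aset adj L r u m).Nonempty ∧
        labVertex adj L r u m = labVertex adj L r v m := by
      intro m hm
      have hmk : m < kOf adj L r u := hm.trans hj.1
      refine ⟨(nonempty_iff_lt_kOf hacyc u m).mpr hmk, ?_⟩
      by_contra hc
      exact Nat.find_min hex hm ⟨hmk, hc⟩
    have hsub := Aset_mono_of_reach hpath j hpre
    have hAu : (Aset adj L r u j).Nonempty := (nonempty_iff_lt_kOf hacyc u j).mpr hj.1
    have hAv : (Aset adj L r v j).Nonempty := by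
      obtain ⟨x, hx⟩ := hAu; exact ⟨x, hsub hx⟩
    have hjv : j < kOf adj L r v := (nonempty_iff_lt_kOf hacyc v j).mp hAv
    have hle : r (labVertex adj L r v j) ≤ r (labVertex adj L r u j) :=
      argminR_le hAv (hsub (argminR_mem hAu))
    have hne : r (labVertex adj L r v j) ≠ r (labVertex adj L r u j) := by
      intro he
      have h1 : labVertex adj L r v j ∈ L := Aset_subset_L v j (argminR_mem hAv)
      have h2 : labVertex adj L r u j ∈ L := Aset_subset_L u j (argminR_mem hAu)
      exact hj.2 (hinj h2 h1 he.symm)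
    have hlt' := lt_of_le_of_ne hle hne
    have hLex : List.Lex (· < ·) (rankSeq adj L r v) (rankSeq adj L r u) := by
      apply lex_of_get' j
      · intro m hm
        rw [rankSeq_getElem?_of_lt (hm.trans hjv), rankSeq_getElem?_of_lt (hm.trans hj.1),
          (hpre m hm).2]
      · exact ⟨_, _, rankSeq_getElem?_of_lt hjv, rankSeq_getElem?_of_lt hj.1, hlt'⟩
    exact lex_asymm' hLex hlt
  · push_neg at hex
    have hpre : ∀ m, m < kOf adj L r u → (Aset adj L r u m).Nonempty ∧
        labVertex adj L r u m = labVertex adj L r v m :=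
      fun m hm => ⟨(nonempty_iff_lt_kOf hacyc u m).mpr hm, hex m hm⟩
    rcases lt_trichotomy (kOf adj L r u) (kOf adj L r v) with h | h | h
    · -- u's label is a strict prefix of v's
      have hLex : List.Lex (· < ·) (rankSeq adj L r v) (rankSeq adj L r u) := by
        apply lex_of_get' (kOf adj L r u)
        · intro m hm
          rw [rankSeq_getElem?_of_lt (hm.trans h), rankSeq_getElem?_of_lt hm, (hex m hm)]
        · refine ⟨_, _, rankSeq_getElem?_of_lt h, rankSeq_getElem?_top u, ?_⟩
          exact (hfin _ (Aset_subset_L v _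
            (argminR_mem ((nonempty_iff_lt_kOf hacyc v _).mpr h)))).lt_top
      exact lex_asymm' hLex hlt
    · have heq : rankSeq adj L r u = rankSeq adj L r v := by
        unfold rankSeq labelSeq
        rw [← h]
        congr 1
        rw [List.map_map, List.map_map]
        refine List.map_congr_left fun m hm => ?_
        rw [List.mem_range] at hm
        simp only [Function.comp_apply, (hex m hm)]
      rw [heq] at hlt
      exact lex_irrefl' _ hlt
    · have hsub := Aset_mono_of_reach hpath (kOf adj L r v)
        (fun m hm => hpre m (hm.trans h))
      have hAu : (Aset adj L r u (kOf adj L r v)).Nonempty :=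
        (nonempty_iff_lt_kOf hacyc u _).mpr h
      have hAv : (Aset adj L r v (kOf adj L r v)).Nonempty := by
        obtain ⟨x, hx⟩ := hAu; exact ⟨x, hsub hx⟩
      exact absurd ((nonempty_iff_lt_kOf hacyc v _).mp hAv) (lt_irrefl _)
end
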